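/- Let (Ω,Σ,μ) be a σ-finite measure space, Σ_a and Σ_b atomic σ-subalgebras of Σ with conditional expectations E_a, E_b, let 2 ≤ p < ∞ and c ≥ 0. If ‖E_aE_bg‖_{L_2(μ)} ≤ c‖g‖_{L_2(μ)} for every g ∈ L_2(μ), then ‖E_aE_bf‖_{L_p(μ)} ≤ c^{2/p}‖f‖_{L_p(μ)} for every f ∈ L_p(μ). -/

import Mathlib

open MeasureTheory ENNReal

/-- An atomic σ-subalgebra of the ambient σ-algebra, encoded by the countable
measurable partition of `Ω` into atoms of positive finite measure generating it. -/
structure AtomicPartition {Ω : Type*} {m : MeasurableSpace Ω} (μ : Measure Ω) where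
  ι : Type
  countable : Countable ι
  atom : ι → Set Ω
  measurableSet : ∀ i, MeasurableSet (atom i)
  disjoint : Pairwise (Function.onFun Disjoint atom)
  cover : ⋃ i, atom i = Set.univ
  pos : ∀ i, 0 < μ (atom i)
  lt_top : ∀ i, μ (atom i) < ∞

namespace AtomicPartition

variable {Ω : Type*} {m : MeasurableSpace Ω} {μ : Measure Ω}

/-- The σ-algebra generated by the atoms. -/
def sigma (P : AtomicPartition μ) : MeasurableSpace Ω :=
  MeasurableSpace.generateFrom (Set.range P.atom)

/-- The conditional expectation onto the atomic σ-algebra: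
`E f = ∑_A (μ(A)⁻¹ ∫_A f dμ) · 1_A`. -/
noncomputable def condExp (P : AtomicPartition μ) {E : Type*} [NormedAddCommGroup E]
    [NormedSpace ℝ E] (f : Ω → E) : Ω → E := fun x =>
  ∑' i, Set.indicator (P.atom i)
    (fun _ => (μ (P.atom i)).toReal⁻¹ • ∫ y in P.atom i, f y ∂μ) x

end AtomicPartition

/-- `|R_B|`: the number (in `ℝ≥0∞`) of atoms of `Pa` meeting the atom `Pb.atom j`
in positive measure. -/
noncomputable def rCard {Ω : Type*} {m : MeasurableSpace Ω} (μ : Measure Ω)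
    (Pa Pb : AtomicPartition μ) (j : Pb.ι) : ℝ≥0∞ :=
  ∑' _i : {i : Pa.ι // 0 < μ (Pa.atom i ∩ Pb.atom j)}, 1

/-- `∑_{B ∈ R_A} |R_B| · μ(A∩B)² / (μ(A)μ(B))` for the atom `A = Pa.atom i`
(terms with `μ(A∩B) = 0` vanish, so we may sum over all atoms of `Pb`). -/
noncomputable def atomSum {Ω : Type*} {m : MeasurableSpace Ω} (μ : Measure Ω)
    (Pa Pb : AtomicPartition μ) (i : Pa.ι) : ℝ≥0∞ :=
  ∑' j : Pb.ι, rCard μ Pa Pb j * μ (Pa.atom i ∩ Pb.atom j) ^ 2 /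
    (μ (Pa.atom i) * μ (Pb.atom j))

/-- `Σ_a ∩ Σ_b = {Ω, ∅}` modulo `μ`-null sets. -/
def TrivialIntersection {Ω : Type*} {m : MeasurableSpace Ω} (μ : Measure Ω)
    (ma mb : MeasurableSpace Ω) : Prop :=
  ∀ S T : Set Ω, MeasurableSet[ma] S → MeasurableSet[mb] T →
    μ (symmDiff S T) = 0 → μ S = 0 ∨ μ Sᶜ = 0

/-- `(Σ_a, Σ_b)` is an admissible covering of `(Ω, Σ, μ)` with distinguished atoms
`A0, B0` (which are actual atoms when `μ` is finite, and `∅`, i.e. `none`, when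
`μ(Ω) = ∞`). -/
structure IsAdmissibleCovering {Ω : Type*} {m : MeasurableSpace Ω} (μ : Measure Ω)
    (Pa Pb : AtomicPartition μ) (A0 : Option Pa.ι) (B0 : Option Pb.ι) : Prop where
  trivial_inter : TrivialIntersection μ Pa.sigma Pb.sigma
  infinite_case : μ Set.univ = ∞ → A0 = none ∧ B0 = none
  finite_case : μ Set.univ < ∞ → A0.isSome ∧ B0.isSome
  small : min (⨆ i ∈ {i : Pa.ι | some i ≠ A0}, atomSum μ Pa Pb i)
      (⨆ j ∈ {j : Pb.ι | some j ≠ B0}, atomSum μ Pb Pa j) < 1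

/-! With `r = p / 2 ≥ 1`, Jensen's inequality on the atoms, applied once for `E_b` and once for
`E_a`, gives the pointwise bound `‖E_a E_b f‖ ^ r ≤ E_a E_b (‖f‖ ^ r)`. Since `‖f‖ ^ r ∈ L₂` with
`‖ ‖f‖ ^ r ‖₂ = ‖f‖_p ^ r`, the `L₂` hypothesis applied to `‖f‖ ^ r` yields
`‖E_a E_b f‖_p ^ r ≤ c ‖f‖_p ^ r`. -/

theorem ENNReal.le_rpow_inv_mul_of_rpow_le_mul_rpow {a b c : ℝ≥0∞} {r : ℝ} (hr : 0 < r)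
    (h : a ^ r ≤ c * b ^ r) : a ≤ c ^ r⁻¹ * b :=
  calc a = (a ^ r) ^ r⁻¹ := (rpow_rpow_inv hr.ne' a).symm
    _ ≤ (c * b ^ r) ^ r⁻¹ := rpow_le_rpow h (inv_nonneg.mpr hr.le)
    _ = c ^ r⁻¹ * b := by rw [mul_rpow_of_nonneg _ _ (inv_nonneg.mpr hr.le), rpow_rpow_inv hr.ne']

namespace MeasureTheory

variable {α E : Type*} {m : MeasurableSpace α} {μ : Measure α}

theorem enorm_average_le_laverage [NormedAddCommGroup E] [NormedSpace ℝ E] (f : α → E) :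
    ‖⨍ x, f x ∂μ‖ₑ ≤ ⨍⁻ x, ‖f x‖ₑ ∂μ := by
  rw [average_eq', laverage_eq']
  exact enorm_integral_le_lintegral_enorm f

theorem average_nonneg {f : α → ℝ} (hf : 0 ≤ f) : 0 ≤ ⨍ x, f x ∂μ := by
  rw [average_eq']
  exact integral_nonneg hf

theorem ofReal_average_eq_laverage {f : α → ℝ} (hf : Integrable f μ) (hf₀ : 0 ≤ᵐ[μ] f) :
    ENNReal.ofReal (⨍ x, f x ∂μ) = ⨍⁻ x, ENNReal.ofReal (f x) ∂μ := by
  rw [ofReal_average hf hf₀, laverage_eq]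

theorem laverage_rpow_le [IsFiniteMeasure μ] {f : α → ℝ≥0∞} (hf : AEMeasurable f μ) {r : ℝ}
    (hr : 1 ≤ r) : (⨍⁻ x, f x ∂μ) ^ r ≤ ⨍⁻ x, f x ^ r ∂μ := by
  have hr₀ : 0 < r := zero_lt_one.trans_le hr
  rcases eq_zero_or_neZero μ with rfl | _
  · simp [zero_rpow_of_pos hr₀]
  -- Jensen for the probability measure `(μ univ)⁻¹ • μ`, as monotonicity of `Lᵖ` norms.
  have h := eLpNorm'_le_eLpNorm'_of_exponent_le one_pos hr ((μ Set.univ)⁻¹ • μ)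
    (hf.smul_measure _).aestronglyMeasurable
  simp only [eLpNorm'_eq_lintegral_enorm, enorm_eq_self, rpow_one, div_one] at h
  calc (⨍⁻ x, f x ∂μ) ^ r ≤ ((⨍⁻ x, f x ^ r ∂μ) ^ (1 / r)) ^ r := rpow_le_rpow h hr₀.le
    _ = ⨍⁻ x, f x ^ r ∂μ := by rw [← rpow_mul, one_div_mul_cancel hr₀.ne', rpow_one]

theorem two_mul_ofReal_half {p : ℝ} : 2 * ENNReal.ofReal (p / 2) = ENNReal.ofReal p := by
  rw [← ofReal_ofNat 2, ← ofReal_mul zero_le_two, mul_div_cancel₀ p two_ne_zero]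

theorem MemLp.norm_rpow_half [NormedAddCommGroup E] {f : α → E} {p : ℝ} (hp : 0 < p)
    (hf : MemLp f (ENNReal.ofReal p) μ) : MemLp (fun x => ‖f x‖ ^ (p / 2)) 2 μ := by
  have h := hf.norm_rpow_div (ENNReal.ofReal (p / 2))
  rwa [toReal_ofReal (by positivity), ← two_mul_ofReal_half,
    ENNReal.mul_div_cancel_right (by simpa using hp) ofReal_ne_top] at h

theorem eLpNorm_norm_rpow_half [NormedAddCommGroup E] (f : α → E) {p : ℝ} (hp : 0 < p) :
    eLpNorm (fun x => ‖f x‖ ^ (p / 2)) 2 μ = eLpNorm f (ENNReal.ofReal p) μ ^ (p / 2) := by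
  rw [eLpNorm_norm_rpow f (by positivity), two_mul_ofReal_half]

end MeasureTheory

namespace AtomicPartition

variable {Ω E : Type*} {m : MeasurableSpace Ω} {μ : Measure Ω} (P : AtomicPartition μ)
  [NormedAddCommGroup E]

theorem exists_mem (x : Ω) : ∃ i, x ∈ P.atom i :=
  Set.mem_iUnion.mp (P.cover ▸ Set.mem_univ x)

theorem eq_of_mem {i j : P.ι} {x : Ω} (hi : x ∈ P.atom i) (hj : x ∈ P.atom j) : i = j := by
  by_contra hij
  exact Set.disjoint_left.mp (P.disjoint hij) hi hj

instance isFiniteMeasure_restrict_atom (i : P.ι) : IsFiniteMeasure (μ.restrict (P.atom i)) :=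
  isFiniteMeasure_restrict.mpr (P.lt_top i).ne

theorem integrableOn_atom {f : Ω → E} {q : ℝ≥0∞} (hf : MemLp f q μ) (hq : 1 ≤ q) (i : P.ι) :
    IntegrableOn f (P.atom i) μ :=
  (hf.restrict _).integrable hq

variable [NormedSpace ℝ E]

theorem condExp_eq_setAverage (f : Ω → E) {i : P.ι} {x : Ω} (hx : x ∈ P.atom i) :
    P.condExp f x = ⨍ y in P.atom i, f y ∂μ := by
  rw [condExp, tsum_eq_single i fun j hj =>
      Set.indicator_of_notMem (fun hxj => hj (P.eq_of_mem hxj hx)) _,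
    Set.indicator_of_mem hx, setAverage_eq, measureReal_def]

theorem measurable_condExp [MeasurableSpace E] (f : Ω → E) : Measurable (P.condExp f) := by
  have := P.countable
  intro s _
  have hpre : P.condExp f ⁻¹' s = ⋃ i : {i // ⨍ y in P.atom i, f y ∂μ ∈ s}, P.atom i := by
    ext x
    obtain ⟨i, hi⟩ := P.exists_mem x
    simp only [Set.mem_preimage, P.condExp_eq_setAverage f hi, Set.mem_iUnion, Subtype.exists]
    exact ⟨fun h => ⟨i, h, hi⟩, fun ⟨j, hj, hxj⟩ => by rwa [P.eq_of_mem hi hxj]⟩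
  rw [hpre]
  exact MeasurableSet.iUnion fun i => P.measurableSet i

theorem condExp_ofReal (F : Ω → ℝ) :
    P.condExp (fun y => (F y : ℂ)) = fun x => ((P.condExp F x : ℝ) : ℂ) := by
  funext x
  obtain ⟨i, hi⟩ := P.exists_mem x
  rw [P.condExp_eq_setAverage _ hi, P.condExp_eq_setAverage _ hi, setAverage_eq',
    setAverage_eq', integral_complex_ofReal]

theorem condExp_nonneg {F : Ω → ℝ} (hF : 0 ≤ F) : 0 ≤ P.condExp F := fun x => by
  obtain ⟨i, hi⟩ := P.exists_mem x
  rw [P.condExp_eq_setAverage F hi]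
  exact average_nonneg hF

theorem enorm_condExp_rpow_le {f : Ω → E} (hf : AEStronglyMeasurable f μ) {r : ℝ} (hr : 1 ≤ r)
    {i : P.ι} {x : Ω} (hx : x ∈ P.atom i) :
    ‖P.condExp f x‖ₑ ^ r ≤ ⨍⁻ y in P.atom i, ‖f y‖ₑ ^ r ∂μ := by
  rw [P.condExp_eq_setAverage f hx]
  calc ‖⨍ y in P.atom i, f y ∂μ‖ₑ ^ r ≤ (⨍⁻ y in P.atom i, ‖f y‖ₑ ∂μ) ^ r :=
        rpow_le_rpow (enorm_average_le_laverage f) (by linarith)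
    _ ≤ ⨍⁻ y in P.atom i, ‖f y‖ₑ ^ r ∂μ := laverage_rpow_le hf.enorm.restrict hr

theorem lintegral_enorm_condExp_rpow_le {f : Ω → E} (hf : AEStronglyMeasurable f μ) {r : ℝ}
    (hr : 1 ≤ r) : ∫⁻ x, ‖P.condExp f x‖ₑ ^ r ∂μ ≤ ∫⁻ x, ‖f x‖ₑ ^ r ∂μ := by
  have := P.countable
  have hsplit (g : Ω → ℝ≥0∞) : ∫⁻ x, g x ∂μ = ∑' i, ∫⁻ x in P.atom i, g x ∂μ := by
    rw [← lintegral_iUnion P.measurableSet P.disjoint, P.cover, Measure.restrict_univ]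
  rw [hsplit, hsplit]
  refine ENNReal.tsum_le_tsum fun i => ?_
  calc ∫⁻ x in P.atom i, ‖P.condExp f x‖ₑ ^ r ∂μ
      ≤ ∫⁻ _ in P.atom i, ⨍⁻ y in P.atom i, ‖f y‖ₑ ^ r ∂μ ∂μ :=
        setLIntegral_mono' (P.measurableSet i) fun x hx => P.enorm_condExp_rpow_le hf hr hx
    _ = ∫⁻ x in P.atom i, ‖f x‖ₑ ^ r ∂μ := lintegral_laverage _ _

theorem eLpNorm_condExp_le {f : Ω → E} (hf : AEStronglyMeasurable f μ) {q : ℝ≥0∞} (hq : 1 ≤ q)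
    (hq_top : q ≠ ∞) : eLpNorm (P.condExp f) q μ ≤ eLpNorm f q μ := by
  have hq₀ : q ≠ 0 := (zero_lt_one.trans_le hq).ne'
  have hq₁ : 1 ≤ q.toReal := by simpa using toReal_mono hq_top hq
  rw [eLpNorm_eq_lintegral_rpow_enorm_toReal hq₀ hq_top,
    eLpNorm_eq_lintegral_rpow_enorm_toReal hq₀ hq_top]
  exact rpow_le_rpow (P.lintegral_enorm_condExp_rpow_le hf hq₁) (by positivity)

theorem memLp_condExp [MeasurableSpace E] [BorelSpace E] [SecondCountableTopology E]
    {f : Ω → E} {q : ℝ≥0∞} (hf : MemLp f q μ) (hq : 1 ≤ q) (hq_top : q ≠ ∞) :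
    MemLp (P.condExp f) q μ :=
  ⟨(P.measurable_condExp f).aestronglyMeasurable,
    (P.eLpNorm_condExp_le hf.1 hq hq_top).trans_lt hf.2⟩

theorem norm_condExp_rpow_le {g : Ω → E} {G : Ω → ℝ} (hg : AEStronglyMeasurable g μ)
    (hG : ∀ i, IntegrableOn G (P.atom i) μ) {r : ℝ} (hr : 1 ≤ r) (hgG : ∀ y, ‖g y‖ ^ r ≤ G y)
    (x : Ω) : ‖P.condExp g x‖ ^ r ≤ P.condExp G x := by
  obtain ⟨i, hx⟩ := P.exists_mem x
  have hr₀ : 0 ≤ r := by linarith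
  have hG₀ : 0 ≤ G := fun y => (by positivity : 0 ≤ ‖g y‖ ^ r).trans (hgG y)
  rw [← ofReal_le_ofReal_iff (P.condExp_nonneg hG₀ x), P.condExp_eq_setAverage G hx,
    ofReal_average_eq_laverage (hG i) (ae_of_all _ hG₀),
    ← ofReal_rpow_of_nonneg (norm_nonneg _) hr₀, ofReal_norm]
  calc ‖P.condExp g x‖ₑ ^ r ≤ ⨍⁻ y in P.atom i, ‖g y‖ₑ ^ r ∂μ := P.enorm_condExp_rpow_le hg hr hx
    _ ≤ ⨍⁻ y in P.atom i, ENNReal.ofReal (G y) ∂μ := by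
      refine setLAverage_mono_ae _ (ae_of_all _ fun y => ?_)
      dsimp only
      rw [← ofReal_norm, ofReal_rpow_of_nonneg (norm_nonneg _) hr₀]
      exact ofReal_le_ofReal (hgG y)

end AtomicPartition

theorem statement8_general {Ω : Type*} [MeasurableSpace Ω] (μ : Measure Ω)
    (Pa Pb : AtomicPartition μ) (p c : ℝ) (hp : 2 ≤ p) (hc : 0 ≤ c)
    (H2 : ∀ g : Ω → ℂ, MemLp g 2 μ →
      eLpNorm (Pa.condExp (Pb.condExp g)) 2 μ ≤ ENNReal.ofReal c * eLpNorm g 2 μ) :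
    ∀ f : Ω → ℂ, MemLp f (ENNReal.ofReal p) μ →
      eLpNorm (Pa.condExp (Pb.condExp f)) (ENNReal.ofReal p) μ
        ≤ ENNReal.ofReal (c ^ (2 / p)) * eLpNorm f (ENNReal.ofReal p) μ := by
  intro f hf
  have hp₀ : 0 < p := by linarith
  set r := p / 2 with hr_def
  have hr : 1 ≤ r := by linarith
  set F : Ω → ℝ := fun y => ‖f y‖ ^ r
  have hF : MemLp F 2 μ := hf.norm_rpow_half hp₀
  have hbF : MemLp (Pb.condExp F) 2 μ := Pb.memLp_condExp hF one_le_two ofNat_ne_top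
  have hpointwise (x : Ω) :
      ‖Pa.condExp (Pb.condExp f) x‖ ^ r ≤ Pa.condExp (Pb.condExp F) x :=
    Pa.norm_condExp_rpow_le (Pb.measurable_condExp f).aestronglyMeasurable
      (Pa.integrableOn_atom hbF one_le_two) hr
      (Pb.norm_condExp_rpow_le hf.1 (Pb.integrableOn_atom hF one_le_two) hr fun _ => le_rfl) x
  have hL2 : eLpNorm (Pa.condExp (Pb.condExp F)) 2 μ ≤ ENNReal.ofReal c * eLpNorm F 2 μ := by
    have hcast (G : Ω → ℝ) : eLpNorm (fun x => (G x : ℂ)) 2 μ = eLpNorm G 2 μ :=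
      eLpNorm_congr_norm_ae (ae_of_all _ fun x => Complex.norm_real _)
    have h := H2 (fun x => (F x : ℂ)) hF.ofReal
    rwa [Pb.condExp_ofReal, Pa.condExp_ofReal, hcast, hcast] at h
  have hpow : eLpNorm (Pa.condExp (Pb.condExp f)) (ENNReal.ofReal p) μ ^ r ≤
      ENNReal.ofReal c * eLpNorm f (ENNReal.ofReal p) μ ^ r := by
    rw [← eLpNorm_norm_rpow_half _ hp₀, ← eLpNorm_norm_rpow_half _ hp₀]
    refine (eLpNorm_mono_real fun x => ?_).trans hL2
    rw [Real.norm_of_nonneg (by positivity)]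
    exact hpointwise x
  have hexp : r⁻¹ = 2 / p := by rw [hr_def, inv_div]
  rw [← hexp, ← ofReal_rpow_of_nonneg hc (by positivity)]
  exact le_rpow_inv_mul_of_rpow_le_mul_rpow (by positivity) hpow

/-- the `p ≥ 2` contraction estimate in the nonfinite case.  If
`‖E_a E_b g‖₂ ≤ c ‖g‖₂` for every `g ∈ L₂(μ)`, then
`‖E_a E_b f‖_p ≤ c^{2/p} ‖f‖_p` for every `f ∈ L_p(μ)`, `2 ≤ p < ∞`. -/
theorem statement8 {Ω : Type*} [MeasurableSpace Ω] (μ : Measure Ω) [SigmaFinite μ]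
    (Pa Pb : AtomicPartition μ) (p c : ℝ) (hp : 2 ≤ p) (hc : 0 ≤ c)
    (H2 : ∀ g : Ω → ℂ, MemLp g 2 μ →
      eLpNorm (Pa.condExp (Pb.condExp g)) 2 μ ≤ ENNReal.ofReal c * eLpNorm g 2 μ) :
    ∀ f : Ω → ℂ, MemLp f (ENNReal.ofReal p) μ →
      eLpNorm (Pa.condExp (Pb.condExp f)) (ENNReal.ofReal p) μ
        ≤ ENNReal.ofReal (c ^ (2 / p)) * eLpNorm f (ENNReal.ofReal p) μ :=
  statement8_general μ Pa Pb p c hp hc H2
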